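/- arXiv:1905.13691 — 2 statements merged into one kernel-verified Lean document; each statement's English description precedes it below -/
import Mathlib

section
/- (Lemma 3.7) Let f_X be a probability density on ℝ with f_X(x) ≤ L for all x ∈ ℝ, and suppose α > −∞ is such that f_X(x) = 0 for x < α. Let f_N denote the N-fold convolution of f_X. Then for all N ≥ 1 and all x > Nα, f_N(x) ≤ (L^N / (N−1)!) · (x − Nα)^{N−1}. (Symmetrically, if β < ∞ and f_X(x) = 0 for x > β, then f_N(x) ≤ (L^N / (N−1)!) · (Nβ − x)^{N−1} for all x < Nβ.) -/
open MeasureTheory Real Set Filter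
open scoped ENNReal NNReal

noncomputable section

/-- Extended moment generating function `E[e^{tX}]` for a random variable with density `f`. -/
def MGFe (f : ℝ → ℝ) (t : ℝ) : ℝ≥0∞ :=
  ∫⁻ x, ENNReal.ofReal (Real.exp (t * x) * f x)

/-- Cumulant generating function (real-valued, meaningful where `MGFe` is finite). -/
def Lam (f : ℝ → ℝ) (t : ℝ) : ℝ := Real.log (MGFe f t).toReal

/-- Extended-real-valued cumulant generating function. -/
def ELam (f : ℝ → ℝ) (t : ℝ) : EReal :=
  if MGFe f t = ⊤ then ⊤ else ((Real.log (MGFe f t).toReal : ℝ) : EReal)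

/-- Legendre transform `Λ*(y) = sup_x (y·x − Λ(x))`, with values in `EReal`. -/
def LegendreE (f : ℝ → ℝ) (y : ℝ) : EReal :=
  ⨆ x : ℝ, ((y * x : ℝ) : EReal) - ELam f x

/-- `iterConv f N` is the `N`-fold convolution of the density `f`, i.e. the density of
`S_N = X₁ + ⋯ + X_N` for i.i.d. `Xᵢ` with density `f` (set to `0` for `N = 0`). -/
def iterConv (f : ℝ → ℝ) : ℕ → ℝ → ℝ
  | 0 => fun _ => 0
  | 1 => f
  | (n+2) => fun x => ∫ y, iterConv f (n+1) (x - y) * f y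

end

/-! Induction on `N`: in `f_{N+1}(x) = ∫ f_N(x - y) f(y) dy` the integrand vanishes unless
`α ≤ y ≤ x - Nα`, and there it is at most `L` times the inductive bound, a multiple of
`(x - Nα - y)^{N-1}`; integrating this power over `y` produces the factor `(x - (N+1)α)^N / N`.
The bound for densities supported in `(-∞, β]` follows by reflecting `f` through the origin. -/

@[simp]
lemma iterConv_one (f : ℝ → ℝ) : iterConv f 1 = f := rfl

lemma iterConv_succ_succ (f : ℝ → ℝ) (n : ℕ) (x : ℝ) :
    iterConv f (n + 2) x = ∫ y, iterConv f (n + 1) (x - y) * f y := rfl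

lemma iterConv_nonneg {f : ℝ → ℝ} (hf : ∀ x, 0 ≤ f x) (N : ℕ) (x : ℝ) :
    0 ≤ iterConv f N x := by
  induction N generalizing x with
  | zero => exact le_rfl
  | succ n ih =>
    cases n with
    | zero => exact hf x
    | succ m =>
      rw [iterConv_succ_succ]
      exact integral_nonneg fun y => mul_nonneg (ih _) (hf y)

lemma iterConv_eq_zero_of_lt {f : ℝ → ℝ} {α : ℝ} (hα : ∀ x, x < α → f x = 0) (N : ℕ) {x : ℝ}
    (hx : x < N * α) : iterConv f N x = 0 := by
  induction N generalizing x with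
  | zero => rfl
  | succ n ih =>
    cases n with
    | zero => exact hα x (by simpa using hx)
    | succ m =>
      rw [iterConv_succ_succ, ← integral_zero ℝ ℝ]
      congr 1 with y
      rcases lt_or_ge y α with hy | hy
      · rw [hα y hy, mul_zero]
      · rw [ih (by push_cast at hx ⊢; linarith), zero_mul]

lemma iterConv_comp_neg (f : ℝ → ℝ) (N : ℕ) (x : ℝ) :
    iterConv (fun y => f (-y)) N x = iterConv f N (-x) := by
  induction N generalizing x with
  | zero => rfl
  | succ n ih =>
    cases n with
    | zero => rfl
    | succ m =>
      rw [iterConv_succ_succ, iterConv_succ_succ,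
        ← integral_neg_eq_self (fun y => iterConv f (m + 1) (-x - y) * f y)]
      congr 1 with y
      rw [ih, neg_sub, sub_neg_eq_add, neg_add_eq_sub]

lemma integral_sub_pow (a b : ℝ) (n : ℕ) :
    ∫ y in a..b, (b - y) ^ n = (b - a) ^ (n + 1) / (n + 1) := by
  simp [intervalIntegral.integral_comp_sub_left (fun u => u ^ n) b, integral_pow]

lemma iterConv_succ_le {f : ℝ → ℝ} {L α C : ℝ} (hf : ∀ x, 0 ≤ f x) (hL : ∀ x, f x ≤ L)
    (hα : ∀ x, x < α → f x = 0) (n m : ℕ) (hC : 0 ≤ C)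
    (ih : ∀ z, (n + 1 : ℕ) * α < z → iterConv f (n + 1) z ≤ C * (z - (n + 1 : ℕ) * α) ^ m)
    {x : ℝ} (hx : (n + 2 : ℕ) * α < x) :
    iterConv f (n + 2) x ≤ C * L * (x - (n + 2 : ℕ) * α) ^ (m + 1) / (m + 1) := by
  set b := x - (n + 1 : ℕ) * α
  have hba : b - α = x - (n + 2 : ℕ) * α := by simp only [b]; push_cast; ring
  have hαb : α < b := by linarith
  have hL0 : 0 ≤ L := (hf 0).trans (hL 0)
  set g : ℝ → ℝ := (Icc α b).indicator fun y => C * L * (b - y) ^ m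
  have hg_nonneg : ∀ y, 0 ≤ g y := fun y => indicator_nonneg (fun y hy =>
    mul_nonneg (mul_nonneg hC hL0) (pow_nonneg (sub_nonneg.2 hy.2) m)) y
  have hg_int : Integrable g :=
    (continuous_const.mul ((continuous_const.sub continuous_id).pow m)).integrableOn_Icc
      |>.integrable_indicator measurableSet_Icc
  have hle : ∀ᵐ y, iterConv f (n + 1) (x - y) * f y ≤ g y := by
    -- at `y = b` the inductive bound is unavailable, since `x - y = (n + 1) α` is not beyond it
    filter_upwards [volume.ae_ne b] with y hy_ne
    rcases lt_or_ge y α with hy | hy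
    · rw [hα y hy, mul_zero]; exact hg_nonneg y
    rcases lt_or_ge b y with hby | hyb
    · rw [iterConv_eq_zero_of_lt hα _ (by linarith), zero_mul]; exact hg_nonneg y
    have hzb : x - y - (n + 1 : ℕ) * α = b - y := by ring
    have hbound := ih (x - y) (by linarith [lt_of_le_of_ne hyb hy_ne])
    rw [hzb] at hbound
    rw [show g y = _ from indicator_of_mem (show y ∈ Icc α b from ⟨hy, hyb⟩) _, mul_right_comm]
    exact mul_le_mul hbound (hL y) (hf y) (mul_nonneg hC (pow_nonneg (by linarith) m))
  have hg_integral : ∫ y, g y = C * L * (x - (n + 2 : ℕ) * α) ^ (m + 1) / (m + 1) := by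
    rw [integral_indicator measurableSet_Icc, integral_Icc_eq_integral_Ioc,
      ← intervalIntegral.integral_of_le hαb.le, intervalIntegral.integral_const_mul,
      integral_sub_pow, hba, mul_div_assoc]
  rw [iterConv_succ_succ, ← hg_integral]
  exact integral_mono_of_nonneg (.of_forall fun y =>
    mul_nonneg (iterConv_nonneg hf _ _) (hf y)) hg_int hle

lemma iterConv_le_of_lower_support {f : ℝ → ℝ} {L α : ℝ} (hf : ∀ x, 0 ≤ f x)
    (hL : ∀ x, f x ≤ L) (hα : ∀ x, x < α → f x = 0) (n : ℕ) {x : ℝ}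
    (hx : (n + 1 : ℕ) * α < x) :
    iterConv f (n + 1) x ≤ L ^ (n + 1) / n.factorial * (x - (n + 1 : ℕ) * α) ^ n := by
  have hL0 : 0 ≤ L := (hf 0).trans (hL 0)
  induction n generalizing x with
  | zero => simpa using hL x
  | succ n ih =>
    refine (iterConv_succ_le hf hL hα n n (by positivity) (fun z hz => ih hz) hx).trans_eq ?_
    rw [Nat.factorial_succ, pow_succ]
    push_cast
    field_simp
    ring

theorem lemma_3_7_general
    (f : ℝ → ℝ) (L : ℝ)
    (hf_nonneg : ∀ x, 0 ≤ f x)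
    (hL : ∀ x, f x ≤ L) :
    (∀ α : ℝ, (∀ x : ℝ, x < α → f x = 0) →
      ∀ N : ℕ, 1 ≤ N → ∀ x : ℝ, (N : ℝ) * α < x →
        iterConv f N x ≤ L ^ N / (Nat.factorial (N - 1)) * (x - (N : ℝ) * α) ^ (N - 1)) ∧
    (∀ β : ℝ, (∀ x : ℝ, β < x → f x = 0) →
      ∀ N : ℕ, 1 ≤ N → ∀ x : ℝ, x < (N : ℝ) * β →
        iterConv f N x ≤ L ^ N / (Nat.factorial (N - 1)) * ((N : ℝ) * β - x) ^ (N - 1)) := by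
  constructor
  · intro α hα N hN x hx
    obtain ⟨n, rfl⟩ := Nat.exists_eq_add_of_le' hN
    exact iterConv_le_of_lower_support hf_nonneg hL hα n hx
  · intro β hβ N hN x hx
    obtain ⟨n, rfl⟩ := Nat.exists_eq_add_of_le' hN
    have hβ' : ∀ y, y < -β → f (-y) = 0 := fun y hy => hβ (-y) (by linarith)
    have h := iterConv_le_of_lower_support (fun y => hf_nonneg (-y)) (fun y => hL (-y)) hβ' n
      (x := -x) (by linarith)
    rwa [iterConv_comp_neg, neg_neg, show -x - (n + 1 : ℕ) * -β = (n + 1 : ℕ) * β - x by ring]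
      at h

/-- **Lemma 3.7.** If the probability density `f_X` is bounded by `L` and supported in
`[α, ∞)` (resp. `(−∞, β]`), then the `N`-fold convolution satisfies
`f_N(x) ≤ (L^N/(N−1)!) (x − Nα)^{N−1}` for `x > Nα`
(resp. `f_N(x) ≤ (L^N/(N−1)!) (Nβ − x)^{N−1}` for `x < Nβ`). -/
theorem lemma_3_7
    (f : ℝ → ℝ) (L : ℝ)
    (hf_nonneg : ∀ x, 0 ≤ f x)
    (hf_meas : Measurable f)
    (hf_mass : ∫⁻ x, ENNReal.ofReal (f x) = 1)
    (hL : ∀ x, f x ≤ L) :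
    (∀ α : ℝ, (∀ x : ℝ, x < α → f x = 0) →
      ∀ N : ℕ, 1 ≤ N → ∀ x : ℝ, (N : ℝ) * α < x →
        iterConv f N x ≤ L ^ N / (Nat.factorial (N - 1)) * (x - (N : ℝ) * α) ^ (N - 1)) ∧
    (∀ β : ℝ, (∀ x : ℝ, β < x → f x = 0) →
      ∀ N : ℕ, 1 ≤ N → ∀ x : ℝ, x < (N : ℝ) * β →
        iterConv f N x ≤ L ^ N / (Nat.factorial (N - 1)) * ((N : ℝ) * β - x) ^ (N - 1)) :=
  lemma_3_7_general f L hf_nonneg hL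
end

section
/- (Lemma 8.4) For γ > 0 let m_γ = ψ⁽⁰⁾(γ) (digamma at γ) and σ_γ = √(ψ⁽¹⁾(γ)) (square root of trigamma at γ), and define f_γ(x) = (σ_γ / Γ(γ)) · exp( γ·(σ_γ·x + m_γ) − e^{σ_γ·x + m_γ} ) for x ∈ ℝ. Then f_γ converges uniformly over compact subsets of ℝ, as γ → ∞, to the standard normal density φ(x) = (2π)^{−1/2}·e^{−x²/2}; that is, for every R > 0, sup_{|x| ≤ R} |f_γ(x) − φ(x)| → 0 as γ → ∞. -/
open MeasureTheory Real Set Filter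
open scoped ENNReal NNReal

noncomputable section

/-- The digamma function `ψ⁰(γ) = (log Γ)'(γ)`. -/
def digamma (γ : ℝ) : ℝ := deriv (fun x => Real.log (Real.Gamma x)) γ

/-- The trigamma function `ψ¹(γ) = (log Γ)''(γ)`. -/
def trigamma (γ : ℝ) : ℝ := deriv (deriv (fun x => Real.log (Real.Gamma x))) γ

/-- The density of the centered and normalized log-gamma variable `(ξ − m_γ)/σ_γ`,
where `ξ` has density `exp(γu − e^u)/Γ(γ)`, `m_γ = ψ⁰(γ)` and `σ_γ = √ψ¹(γ)`:
`f_γ(x) = (σ_γ/Γ(γ)) exp(γ(σ_γ x + m_γ) − e^{σ_γ x + m_γ})`. -/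
def logGammaDensity (γ : ℝ) (x : ℝ) : ℝ :=
  (Real.sqrt (trigamma γ) / Real.Gamma γ) *
    Real.exp (γ * (Real.sqrt (trigamma γ) * x + digamma γ) -
      Real.exp (Real.sqrt (trigamma γ) * x + digamma γ))

end

/-!
Write `log (f_γ(x) / φ(x)) = a(γ) + b_γ(x)`, where `b_γ` collects the terms that depend on `x`.
Everything rests on the bounds `ψ(x) ≤ log x ≤ ψ(x) + 1/x` and `1/x ≤ ψ'(x) ≤ 1/(x - 1)`.
The first pair is the convexity of `log Γ`, compared with its slope `log x` on `[x, x + 1]`; the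
second is the concavity of `ψ`, compared with its slopes `1/(x - 1)` and `1/x` on `[x - 1, x]`
and `[x, x + 1]`, and `ψ` is concave as the pointwise limit of the concave functions
`log (x + n) - ∑_{k<n} 1/(x + k)`. Since `σ_γ² = ψ'(γ) ~ 1/γ` and `e^{ψ(γ)} = γ + O(1)`, the
second-order Taylor expansion of `e^{σ_γ x}` gives `b_γ → 0` uniformly on `[-R, R]`, while
`a(γ) → 0` reduces to `γ ψ'(γ) → 1` and Stirling's formula for `Γ` on the reals. The latter
follows from the factorial version, since the derivative of Binet's function
`log Γ(x) - (x - 1/2) log x + x - log (2π)/2` is `ψ(x) - log x + 1/(2x) = O(1/x)`.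
-/

open Topology

theorem ConcaveOn.of_tendsto {E ι : Type*} [AddCommMonoid E] [Module ℝ E] {s : Set E}
    {l : Filter ι} [l.NeBot] {f : ι → E → ℝ} {g : E → ℝ} (hs : Convex ℝ s)
    (hf : ∀ᶠ i in l, ConcaveOn ℝ s (f i)) (hfg : ∀ x ∈ s, Tendsto (f · x) l (𝓝 (g x))) :
    ConcaveOn ℝ s g :=
  ⟨hs, fun x hx y hy a b ha hb hab =>
    le_of_tendsto_of_tendsto (((hfg x hx).const_smul a).add ((hfg y hy).const_smul b))
      (hfg _ (hs hx hy ha hb hab)) (hf.mono fun _ hi => hi.2 hx hy ha hb hab)⟩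

theorem tendsto_atTop_of_tendsto_natCast_of_tendsto_deriv {E : Type*} [NormedAddCommGroup E]
    [NormedSpace ℝ E] {f f' : ℝ → E} {L : E} (hf : ∀ᶠ x in atTop, HasDerivAt f (f' x) x)
    (hf' : Tendsto f' atTop (𝓝 0)) (hL : Tendsto (fun n : ℕ => f n) atTop (𝓝 L)) :
    Tendsto f atTop (𝓝 L) := by
  have hfloor : Tendsto (fun x => f x - f ⌊x⌋₊) atTop (𝓝 0) := by
    refine Metric.tendsto_nhds.2 fun ε hε => ?_
    obtain ⟨X, hX⟩ := eventually_atTop.1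
      (hf.and (hf'.eventually (Metric.closedBall_mem_nhds 0 (half_pos hε))))
    filter_upwards [eventually_ge_atTop (max X 0 + 1)] with x hx
    have hnx : (⌊x⌋₊ : ℝ) ≤ x := Nat.floor_le (by linarith [le_max_right X 0])
    have hXn : X ≤ ⌊x⌋₊ := by linarith [Nat.lt_floor_add_one x, le_max_left X 0]
    have hmvt := (convex_Icc (⌊x⌋₊ : ℝ) x).norm_image_sub_le_of_norm_hasDerivWithin_le
      (fun y hy => (hX y (hXn.trans hy.1)).1.hasDerivWithinAt)
      (fun y hy => by simpa using (hX y (hXn.trans hy.1)).2)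
      (left_mem_Icc.2 hnx) (right_mem_Icc.2 hnx)
    rw [dist_zero_right]
    calc ‖f x - f ⌊x⌋₊‖ ≤ ε / 2 * ‖x - ⌊x⌋₊‖ := hmvt
      _ ≤ ε / 2 * 1 := by
        gcongr
        rw [Real.norm_of_nonneg (sub_nonneg.2 hnx)]
        linarith [Nat.lt_floor_add_one x]
      _ < ε := by linarith
  simpa using hfloor.add (hL.comp tendsto_nat_floor_atTop)

theorem tendstoUniformlyOn_zero_of_abs_le {ι α : Type*} {l : Filter ι} {s : Set α}
    {f : ι → α → ℝ} {u : ι → ℝ} (hf : ∀ᶠ i in l, ∀ x ∈ s, |f i x| ≤ u i)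
    (hu : Tendsto u l (𝓝 0)) : TendstoUniformlyOn f 0 l s := by
  refine SeminormedAddGroup.tendstoUniformlyOn_zero.2 fun ε hε => ?_
  filter_upwards [hf, hu.eventually (gt_mem_nhds hε)] with i hi hui x hx
  exact (hi x hx).trans_lt hui

theorem tendstoUniformlyOn_mul_exp {ι α : Type*} {l : Filter ι} {s : Set α} {h : α → ℝ}
    {g : ι → α → ℝ} {C : ℝ} (hh : ∀ x ∈ s, |h x| ≤ C) (hg : TendstoUniformlyOn g 0 l s) :
    TendstoUniformlyOn (fun i x => h x * exp (g i x)) h l s := by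
  rw [Metric.tendstoUniformlyOn_iff]
  intro ε hε
  have hδ : 0 < min 1 (ε / (2 * (|C| + 1))) := by positivity
  filter_upwards [SeminormedAddGroup.tendstoUniformlyOn_zero.1 hg _ hδ] with i hi x hx
  have hgx : |g i x| < min 1 (ε / (2 * (|C| + 1))) := hi x hx
  have hexp := abs_exp_sub_one_le (hgx.le.trans (min_le_left _ _))
  rw [dist_eq_norm, Real.norm_eq_abs, ← mul_one_sub, abs_mul, abs_sub_comm]
  calc |h x| * |exp (g i x) - 1| ≤ (|C| + 1) * (2 * |g i x|) := by
        gcongr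
        exact (hh x hx).trans ((le_abs_self C).trans (le_add_of_nonneg_right zero_le_one))
    _ < (|C| + 1) * (2 * (ε / (2 * (|C| + 1)))) := by
        gcongr
        exact hgx.trans_le (min_le_right _ _)
    _ = ε := by field_simp

theorem abs_exp_sub_quadratic_le {x : ℝ} (hx : |x| ≤ 1) :
    |exp x - (1 + x + x ^ 2 / 2)| ≤ |x| ^ 3 := by
  have h := Real.exp_bound hx (n := 3) (by norm_num)
  norm_num [Finset.sum_range_succ, Nat.factorial] at h
  nlinarith [pow_nonneg (abs_nonneg x) 3]

theorem analyticOnNhd_log_Gamma : AnalyticOnNhd ℝ (fun x => log (Gamma x)) (Ioi 0) := by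
  intro x hx
  have hΓ : AnalyticAt ℂ Complex.Gamma x := by
    refine DifferentiableOn.analyticAt (s := {s : ℂ | 0 < s.re})
      (fun s hs => (Complex.differentiableAt_Gamma s fun m h => ?_).differentiableWithinAt)
      ((isOpen_lt continuous_const Complex.continuous_re).mem_nhds (by simpa using hx))
    have hm : s.re = -m := by simpa using congrArg Complex.re h
    linarith [hs.out, m.cast_nonneg (α := ℝ)]
  have hre : AnalyticAt ℝ (fun y : ℝ => (Complex.Gamma y).re) x :=
    Complex.reCLM.analyticAt _ |>.comp (hΓ.restrictScalars.comp (Complex.ofRealCLM.analyticAt x))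
  simp only [Complex.Gamma_ofReal, Complex.ofReal_re] at hre
  exact hre.log (Gamma_pos_of_pos hx)

theorem hasDerivAt_log_Gamma {x : ℝ} (hx : 0 < x) :
    HasDerivAt (fun y => log (Gamma y)) (digamma x) x :=
  (analyticOnNhd_log_Gamma x hx).differentiableAt.hasDerivAt

theorem hasDerivAt_digamma {x : ℝ} (hx : 0 < x) : HasDerivAt digamma (trigamma x) x :=
  (analyticOnNhd_log_Gamma.deriv x hx).differentiableAt.hasDerivAt

theorem digamma_add_one {x : ℝ} (hx : 0 < x) : digamma (x + 1) = digamma x + x⁻¹ := by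
  have h : (fun y => log (Gamma (y + 1))) =ᶠ[𝓝 x] fun y => log (Gamma y) + log y := by
    filter_upwards [Ioi_mem_nhds hx] with y hy
    rw [Gamma_add_one hy.ne', log_mul hy.ne' (Gamma_pos_of_pos hy).ne', add_comm]
  have h1 := (hasDerivAt_log_Gamma (by linarith : 0 < x + 1)).comp_add_const x 1
  exact h1.unique ((h.hasDerivAt_iff).2 ((hasDerivAt_log_Gamma hx).add (hasDerivAt_log hx.ne')))

theorem slope_log_comp_Gamma {x : ℝ} (hx : 0 < x) : slope (log ∘ Gamma) x (x + 1) = log x := by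
  simp [slope_def_field, Gamma_add_one hx.ne', log_mul hx.ne' (Gamma_pos_of_pos hx).ne']

theorem digamma_le_log {x : ℝ} (hx : 0 < x) : digamma x ≤ log x :=
  slope_log_comp_Gamma hx ▸ convexOn_log_Gamma.le_slope_of_hasDerivAt hx
    (mem_Ioi.2 (by linarith)) (lt_add_one x) (hasDerivAt_log_Gamma hx)

theorem log_le_digamma_add_inv {x : ℝ} (hx : 0 < x) : log x ≤ digamma x + x⁻¹ :=
  digamma_add_one hx ▸ slope_log_comp_Gamma hx ▸ convexOn_log_Gamma.slope_le_of_hasDerivAt hx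
    (mem_Ioi.2 (by linarith)) (lt_add_one x) (hasDerivAt_log_Gamma (by linarith))

theorem abs_digamma_sub_log_le {x : ℝ} (hx : 0 < x) : |digamma x - log x| ≤ x⁻¹ := by
  rw [abs_le]
  constructor <;> linarith [digamma_le_log hx, log_le_digamma_add_inv hx, inv_pos.2 hx]

theorem digamma_add_nat {x : ℝ} (hx : 0 < x) (n : ℕ) :
    digamma (x + n) = digamma x + ∑ k ∈ Finset.range n, (x + k)⁻¹ := by
  induction n with
  | zero => simp
  | succ n ih =>
    rw [Nat.cast_succ, ← add_assoc, digamma_add_one (by positivity), ih,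
      Finset.sum_range_succ, add_assoc]

theorem tendsto_log_sub_digamma_atTop : Tendsto (fun x => log x - digamma x) atTop (𝓝 0) :=
  squeeze_zero_norm' ((eventually_gt_atTop 0).mono fun x hx => by
    simpa only [Real.norm_eq_abs, abs_sub_comm] using abs_digamma_sub_log_le hx)
    tendsto_inv_atTop_zero

theorem tendsto_log_add_nat_sub_sum_inv {x : ℝ} (hx : 0 < x) :
    Tendsto (fun n : ℕ => log (x + n) - ∑ k ∈ Finset.range n, (x + k)⁻¹) atTop
      (𝓝 (digamma x)) := by
  have h := (tendsto_log_sub_digamma_atTop.comp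
    (tendsto_atTop_add_const_left _ x tendsto_natCast_atTop_atTop)).const_add (digamma x)
  rw [add_zero] at h
  refine h.congr fun n => ?_
  rw [Function.comp_apply, digamma_add_nat hx]
  ring

theorem concaveOn_log_add_nat_sub_sum_inv (n : ℕ) :
    ConcaveOn ℝ (Ioi 0) fun x : ℝ => log (x + n) - ∑ k ∈ Finset.range n, (x + k)⁻¹ := by
  have shift : ∀ {f : ℝ → ℝ} (c : ℝ), 0 ≤ c → ConcaveOn ℝ (Ioi 0) f →
      ConcaveOn ℝ (Ioi 0) fun x => f (x + c) := fun c hc hf =>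
    (hf.translate_left c).subset (fun x (hx : 0 < x) => show 0 < c + x by linarith)
      (convex_Ioi 0)
  have hinv : ConcaveOn ℝ (Ioi 0) fun x : ℝ => -x⁻¹ := by
    have h := (convexOn_zpow (𝕜 := ℝ) (-1)).neg
    simp only [zpow_neg_one] at h
    exact h
  have hsum : ConcaveOn ℝ (Ioi 0) fun x : ℝ => ∑ k ∈ Finset.range n, -(x + k)⁻¹ := by
    induction n with
    | zero => simpa using concaveOn_const (0 : ℝ) (convex_Ioi 0)
    | succ n ih =>
      simp only [Finset.sum_range_succ]
      exact ih.add (shift n n.cast_nonneg hinv)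
  simp only [sub_eq_add_neg, ← Finset.sum_neg_distrib]
  exact (shift n n.cast_nonneg strictConcaveOn_log_Ioi.concaveOn).add hsum

theorem concaveOn_digamma : ConcaveOn ℝ (Ioi 0) digamma :=
  .of_tendsto (convex_Ioi 0) (.of_forall concaveOn_log_add_nat_sub_sum_inv)
    fun _ hx => tendsto_log_add_nat_sub_sum_inv hx

theorem inv_le_trigamma {x : ℝ} (hx : 0 < x) : x⁻¹ ≤ trigamma x := by
  have h := concaveOn_digamma.slope_le_of_hasDerivAt hx (mem_Ioi.2 (by linarith))
    (lt_add_one x) (hasDerivAt_digamma hx)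
  rwa [slope_def_field, digamma_add_one hx, add_sub_cancel_left, add_sub_cancel_left,
    div_one] at h

theorem trigamma_le_inv_sub_one {x : ℝ} (hx : 1 < x) : trigamma x ≤ (x - 1)⁻¹ := by
  have hx' : 0 < x - 1 := by linarith
  have h := concaveOn_digamma.le_slope_of_hasDerivAt hx' (mem_Ioi.2 (by linarith))
    (sub_one_lt x) (hasDerivAt_digamma (by linarith))
  have e : digamma x = digamma (x - 1) + (x - 1)⁻¹ := by simpa using digamma_add_one hx'
  rwa [slope_def_field, e, add_sub_cancel_left, sub_sub_cancel, div_one] at h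

theorem trigamma_pos {x : ℝ} (hx : 0 < x) : 0 < trigamma x :=
  (inv_pos.2 hx).trans_le (inv_le_trigamma hx)

noncomputable def binet (x : ℝ) : ℝ := log (Gamma x) - ((x - 1 / 2) * log x - x + log (2 * π) / 2)

theorem binet_natCast {n : ℕ} (hn : n ≠ 0) :
    binet n = log (Stirling.stirlingSeq n) - log √π := by
  have hn' : (0 : ℝ) < n := by positivity
  have hΓ : log (Gamma n) = log n.factorial - log n := by
    rw [← Gamma_nat_eq_factorial, Gamma_add_one hn'.ne',
      log_mul hn'.ne' (Gamma_pos_of_pos hn').ne']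
    ring
  rw [binet, hΓ, Stirling.log_stirlingSeq_formula, log_sqrt pi_pos.le,
    log_mul two_ne_zero hn'.ne', log_div hn'.ne' (exp_pos 1).ne', log_exp,
    log_mul two_ne_zero pi_pos.ne']
  ring

theorem hasDerivAt_binet {x : ℝ} (hx : 0 < x) :
    HasDerivAt binet (digamma x - log x + (2 * x)⁻¹) x := by
  have h : HasDerivAt binet (digamma x - (1 * log x + (x - 1 / 2) * x⁻¹ - 1)) x :=
    (hasDerivAt_log_Gamma hx).fun_sub
      (((((hasDerivAt_id' x).sub_const (1 / 2)).fun_mul (hasDerivAt_log hx.ne')).fun_sub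
        (hasDerivAt_id' x)).add_const _)
  convert h using 1
  field_simp
  ring

theorem abs_deriv_binet_le {x : ℝ} (hx : 0 < x) :
    |digamma x - log x + (2 * x)⁻¹| ≤ (2 * x)⁻¹ := by
  have h := digamma_le_log hx
  have h' := log_le_digamma_add_inv hx
  rw [mul_inv, abs_le]
  constructor <;> linarith

theorem tendsto_binet_atTop : Tendsto binet atTop (𝓝 0) := by
  have hinv : Tendsto (fun x : ℝ => (2 * x)⁻¹) atTop (𝓝 0) :=
    tendsto_inv_atTop_zero.comp (tendsto_id.const_mul_atTop two_pos)
  refine tendsto_atTop_of_tendsto_natCast_of_tendsto_deriv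
    ((eventually_gt_atTop 0).mono fun x hx => hasDerivAt_binet hx)
    (squeeze_zero_norm' ((eventually_gt_atTop 0).mono fun x hx => abs_deriv_binet_le hx) hinv)
    ?_
  have h := (Stirling.tendsto_stirlingSeq_sqrt_pi.log (sqrt_pos.2 pi_pos).ne').sub_const (log √π)
  rw [sub_self] at h
  exact h.congr' ((eventually_ne_atTop 0).mono fun n hn => (binet_natCast hn).symm)

theorem exp_digamma_le {x : ℝ} (hx : 0 < x) : exp (digamma x) ≤ x :=
  (exp_le_exp.2 (digamma_le_log hx)).trans_eq (exp_log hx)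

theorem abs_exp_digamma_sub_le {x : ℝ} (hx : 0 < x) : |exp (digamma x) - x| ≤ 1 := by
  have hlo : x - 1 ≤ exp (digamma x) := by
    calc x - 1 = x * (1 - x⁻¹) := by field_simp
      _ ≤ x * exp (-x⁻¹) := by gcongr; linarith [add_one_le_exp (-x⁻¹)]
      _ = exp (log x - x⁻¹) := by rw [exp_sub, exp_log hx, exp_neg, div_eq_mul_inv]
      _ ≤ exp (digamma x) := exp_le_exp.2 (by linarith [log_le_digamma_add_inv hx])
  rw [abs_le]
  constructor <;> linarith [exp_digamma_le hx]

theorem tendsto_mul_trigamma_atTop : Tendsto (fun x => x * trigamma x) atTop (𝓝 1) := by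
  have h : Tendsto (fun x : ℝ => 1 + (x - 1)⁻¹) atTop (𝓝 1) := by
    simpa [sub_eq_add_neg] using
      (tendsto_inv_atTop_zero.comp (tendsto_atTop_add_const_right _ (-1 : ℝ) tendsto_id)
      |>.const_add 1)
  refine tendsto_of_tendsto_of_tendsto_of_le_of_le' tendsto_const_nhds h ?_ ?_
  all_goals filter_upwards [eventually_gt_atTop 1] with x hx
  · calc (1 : ℝ) = x * x⁻¹ := (mul_inv_cancel₀ (by positivity)).symm
      _ ≤ x * trigamma x := by gcongr; exact inv_le_trigamma (by positivity)
  · calc x * trigamma x ≤ x * (x - 1)⁻¹ := by gcongr; exact trigamma_le_inv_sub_one hx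
      _ = 1 + (x - 1)⁻¹ := by field_simp; ring

theorem tendsto_trigamma_atTop : Tendsto trigamma atTop (𝓝 0) := by
  have h := tendsto_mul_trigamma_atTop.mul tendsto_inv_atTop_zero
  rw [mul_zero] at h
  refine h.congr' ?_
  filter_upwards [eventually_gt_atTop 0] with x hx
  field_simp

theorem tendsto_exp_digamma_mul_trigamma_atTop :
    Tendsto (fun x => exp (digamma x) * trigamma x) atTop (𝓝 1) := by
  have h : Tendsto (fun x => (exp (digamma x) - x) * trigamma x) atTop (𝓝 0) := by
    refine squeeze_zero_norm' ?_ tendsto_trigamma_atTop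
    filter_upwards [eventually_gt_atTop 0] with x hx
    have hτ := (trigamma_pos hx).le
    rw [norm_mul, Real.norm_of_nonneg hτ]
    exact mul_le_of_le_one_left hτ (abs_exp_digamma_sub_le hx)
  simpa [sub_mul] using h.add tendsto_mul_trigamma_atTop

noncomputable def logDensityRatioConst (γ : ℝ) : ℝ :=
  log √(trigamma γ) - log (Gamma γ) + γ * digamma γ - exp (digamma γ) + log (2 * π) / 2

noncomputable def logDensityRatioVar (γ x : ℝ) : ℝ :=
  γ * (√(trigamma γ) * x) - exp (digamma γ) * (exp (√(trigamma γ) * x) - 1) + x ^ 2 / 2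

theorem logGammaDensity_eq_mul_exp {γ : ℝ} (hγ : 0 < γ) (x : ℝ) :
    logGammaDensity γ x = exp (-x ^ 2 / 2) / √(2 * π) *
      exp (logDensityRatioConst γ + logDensityRatioVar γ x) := by
  have hσ : 0 < √(trigamma γ) := sqrt_pos.2 (trigamma_pos hγ)
  have h2π : 0 < √(2 * π) := sqrt_pos.2 (by positivity)
  have hΓ := Gamma_pos_of_pos hγ
  rw [logGammaDensity, ← exp_log (div_pos hσ hΓ), ← exp_log h2π, ← exp_sub, ← exp_add,
    ← exp_add]
  congr 1
  rw [logDensityRatioConst, logDensityRatioVar, log_div hσ.ne' hΓ.ne',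
    log_sqrt (by positivity : (0 : ℝ) ≤ 2 * π), exp_add]
  ring

theorem logDensityRatioConst_eq {γ : ℝ} (hγ : 0 < γ) :
    logDensityRatioConst γ = log (γ * trigamma γ) / 2 - binet γ -
      γ * (exp (digamma γ - log γ) - 1 - (digamma γ - log γ)) := by
  rw [logDensityRatioConst, binet, log_sqrt (trigamma_pos hγ).le,
    log_mul hγ.ne' (trigamma_pos hγ).ne', exp_sub, exp_log hγ]
  field_simp
  ring

theorem tendsto_logDensityRatioConst_atTop : Tendsto logDensityRatioConst atTop (𝓝 0) := by
  have hlog : Tendsto (fun γ => log (γ * trigamma γ) / 2) atTop (𝓝 0) := by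
    simpa using (tendsto_mul_trigamma_atTop.log one_ne_zero).div_const 2
  have hrem : Tendsto (fun γ => γ * (exp (digamma γ - log γ) - 1 - (digamma γ - log γ))) atTop
      (𝓝 0) := by
    refine squeeze_zero_norm' ?_ tendsto_inv_atTop_zero
    filter_upwards [eventually_ge_atTop 1] with γ hγ
    have hγ0 : 0 < γ := by linarith
    have hδ := abs_digamma_sub_log_le hγ0
    have hexp := abs_exp_sub_one_sub_id_le (hδ.trans (inv_le_one_of_one_le₀ hγ))
    rw [norm_mul, Real.norm_of_nonneg hγ0.le, Real.norm_eq_abs]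
    calc γ * |exp (digamma γ - log γ) - 1 - (digamma γ - log γ)|
        ≤ γ * (γ⁻¹) ^ 2 := by
          gcongr
          exact hexp.trans (sq_le_sq' (abs_le.1 hδ).1 (abs_le.1 hδ).2)
      _ = γ⁻¹ := by field_simp
  simpa using ((hlog.sub tendsto_binet_atTop).sub hrem).congr'
    ((eventually_gt_atTop 0).mono fun γ hγ => (logDensityRatioConst_eq hγ).symm)

theorem abs_logDensityRatioVar_le {γ x R : ℝ} (hγ : 0 < γ) (hx : |x| ≤ R)
    (hσR : √(trigamma γ) * R ≤ 1) :
    |logDensityRatioVar γ x| ≤ √(trigamma γ) * R +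
      |1 - exp (digamma γ) * trigamma γ| * R ^ 2 / 2 +
      γ * trigamma γ * √(trigamma γ) * R ^ 3 := by
  set σ := √(trigamma γ) with hσ
  set t := σ * x with ht
  have hσ0 : 0 ≤ σ := sqrt_nonneg _
  have hσ2 : σ ^ 2 = trigamma γ := sq_sqrt (trigamma_pos hγ).le
  have htR : |t| ≤ σ * R := by rw [ht, abs_mul, abs_of_nonneg hσ0]; gcongr
  have hr := abs_exp_sub_quadratic_le (htR.trans hσR)
  have hm := abs_exp_digamma_sub_le hγ
  have hm0 := exp_pos (digamma γ)
  have hdecomp : logDensityRatioVar γ x = (γ - exp (digamma γ)) * t +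
      (1 - exp (digamma γ) * trigamma γ) * x ^ 2 / 2 -
      exp (digamma γ) * (exp t - (1 + t + t ^ 2 / 2)) := by
    rw [logDensityRatioVar, ← hσ, ← ht, ← hσ2, ht]
    ring
  rw [hdecomp]
  refine ((abs_sub _ _).trans (add_le_add_left (abs_add_le _ _) _)).trans
    (add_le_add (add_le_add ?_ ?_) ?_)
  · rw [abs_mul, abs_sub_comm]
    simpa using mul_le_mul hm htR (abs_nonneg t) zero_le_one
  · have hx2 : x ^ 2 ≤ R ^ 2 := by
      rw [← sq_abs]
      exact pow_le_pow_left₀ (abs_nonneg x) hx 2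
    rw [abs_div, abs_mul, abs_of_nonneg (sq_nonneg x), abs_two]
    gcongr
  · rw [abs_mul, abs_of_pos hm0, ← hσ2]
    calc exp (digamma γ) * |exp t - (1 + t + t ^ 2 / 2)| ≤ γ * (σ * R) ^ 3 := by
          gcongr
          · exact exp_digamma_le hγ
          · exact hr.trans (pow_le_pow_left₀ (abs_nonneg t) htR 3)
      _ = γ * σ ^ 2 * σ * R ^ 3 := by ring

theorem tendstoUniformlyOn_logDensityRatioVar (R : ℝ) :
    TendstoUniformlyOn logDensityRatioVar 0 atTop (Icc (-R) R) := by
  have hσ : Tendsto (fun γ => √(trigamma γ)) atTop (𝓝 0) := by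
    simpa using tendsto_trigamma_atTop.sqrt
  refine tendstoUniformlyOn_zero_of_abs_le ?_ (u := fun γ => √(trigamma γ) * R +
      |1 - exp (digamma γ) * trigamma γ| * R ^ 2 / 2 +
      γ * trigamma γ * √(trigamma γ) * R ^ 3) ?_
  · filter_upwards [eventually_gt_atTop 0,
      (hσ.mul_const R).eventually (ge_mem_nhds (by simp : (0 : ℝ) * R < 1))] with γ hγ hσR x hx
    exact abs_logDensityRatioVar_le hγ (abs_le.2 hx) hσR
  · simpa using ((hσ.mul_const R).add
      (((tendsto_exp_digamma_mul_trigamma_atTop.const_sub 1).abs.mul_const _).div_const 2)).add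
      ((tendsto_mul_trigamma_atTop.mul hσ).mul_const _)

theorem abs_gaussian_le_one (x : ℝ) : |exp (-x ^ 2 / 2) / √(2 * π)| ≤ 1 := by
  have h2π : 1 ≤ √(2 * π) := one_le_sqrt.2 (by linarith [pi_gt_three])
  rw [abs_of_nonneg (by positivity), div_le_one (by linarith)]
  exact (exp_le_one_iff.2 (by nlinarith [sq_nonneg x])).trans h2π

theorem lemma_8_4_general (R : ℝ) :
    TendstoUniformlyOn (fun (γ : ℝ) (x : ℝ) => logGammaDensity γ x)
      (fun x : ℝ => Real.exp (-x ^ 2 / 2) / Real.sqrt (2 * Real.pi))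
      Filter.atTop (Set.Icc (-R) R) := by
  have hratio : TendstoUniformlyOn (fun γ x => logDensityRatioConst γ + logDensityRatioVar γ x)
      0 atTop (Icc (-R) R) := by
    convert (tendsto_logDensityRatioConst_atTop.tendstoUniformlyOn_const _).add
      (tendstoUniformlyOn_logDensityRatioVar R) using 1
    · rfl
    · exact (add_zero (0 : ℝ → ℝ)).symm
  refine (tendstoUniformlyOn_mul_exp (fun x _ => abs_gaussian_le_one x) hratio).congr ?_
  filter_upwards [eventually_gt_atTop 0] with γ hγ x _
  exact (logGammaDensity_eq_mul_exp hγ x).symm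

/-- **Lemma 8.4.** The standardized log-gamma density `f_γ` converges uniformly over compact
sets, as `γ → ∞`, to the standard normal density `φ(x) = (2π)^{−1/2} e^{−x²/2}`. -/
theorem lemma_8_4 (R : ℝ) (hR : 0 < R) :
    TendstoUniformlyOn (fun (γ : ℝ) (x : ℝ) => logGammaDensity γ x)
      (fun x : ℝ => Real.exp (-x ^ 2 / 2) / Real.sqrt (2 * Real.pi))
      Filter.atTop (Set.Icc (-R) R) :=
  lemma_8_4_general R
end
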